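/- Let S be a countable commutative semigroup such that for every d ∈ ℕ the set dS = {d·x : x ∈ S} is piecewise syndetic in S. If M ⊆ S × S is piecewise syndetic, then for any d ∈ ℕ the set {(s, d·t) : (s,t) ∈ M} is piecewise syndetic in S × S. -/
import Mathlib


/-- `Thick B`: every finite set has a translate contained in `B`. -/
def Thick {S : Type*} [AddCommSemigroup S] (B : Set S) : Prop :=
  ∀ F : Finset S, ∃ x : S, ∀ f ∈ F, f + x ∈ B

/-- `PiecewiseSyndetic A`: some finite union of translates `-t+A` is thick. -/
def PiecewiseSyndetic {S : Type*} [AddCommSemigroup S] (A : Set S) : Prop :=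
  ∃ F : Finset S, Thick {s : S | ∃ t ∈ F, t + s ∈ A}

/-- `itAdd n t` is the `(n+1)`-fold sum `t + t + ⋯ + t`. -/
def itAdd {S : Type*} [AddCommSemigroup S] : ℕ → S → S
  | 0, t => t
  | n + 1, t => itAdd n t + t

theorem itAdd_add {S : Type*} [AddCommSemigroup S] (n : ℕ) (a b : S) :
    itAdd n (a + b) = itAdd n a + itAdd n b := by
  induction n with
  | zero => rfl
  | succ n ih => rw [itAdd, itAdd, itAdd, ih, add_add_add_comm]

theorem stmt_6 {S : Type*} [AddCommSemigroup S] [Countable S]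
    (hS : ∀ d : ℕ, 0 < d → PiecewiseSyndetic {x : S | ∃ s : S, x = itAdd (d - 1) s})
    (M : Set (S × S)) (hM : PiecewiseSyndetic M) (d : ℕ) (hd : 0 < d) :
    PiecewiseSyndetic
      {p : S × S | ∃ q ∈ M, p = (q.1, itAdd (d - 1) q.2)} := by
  classical
  obtain ⟨H, hH⟩ := hS d hd
  obtain ⟨F, hF⟩ := hM
  refine ⟨(F ×ˢ H).image (fun fh => (fh.1.1, itAdd (d - 1) fh.1.2 + fh.2)), fun G' => ?_⟩
  -- Step 1: use piecewise syndeticity of dS on the second coordinates of G'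
  obtain ⟨y, hy⟩ := hH (G'.image Prod.snd)
  simp only [Set.mem_setOf_eq] at hy
  choose h hhH s hs using hy
  -- Step 2: use piecewise syndeticity of M on the modified finite set
  obtain ⟨x, hx⟩ := hF (G'.attach.image
    (fun (g : {p // p ∈ G'}) => (g.1.1, s g.1.2 (Finset.mem_image_of_mem Prod.snd g.2))))
  refine ⟨(x.1, y + itAdd (d - 1) x.2), fun g' hg' => ?_⟩
  have hb : g'.2 ∈ G'.image Prod.snd := Finset.mem_image_of_mem Prod.snd hg'
  obtain ⟨f, hfF, hfM⟩ := hx (g'.1, s g'.2 hb)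
    (Finset.mem_image.2 ⟨⟨g', hg'⟩, Finset.mem_attach _ _, rfl⟩)
  refine ⟨(f.1, itAdd (d - 1) f.2 + h g'.2 hb), Finset.mem_image.2
    ⟨(f, h g'.2 hb), Finset.mem_product.2 ⟨hfF, hhH g'.2 hb⟩, rfl⟩, ?_⟩
  refine ⟨f + ((g'.1, s g'.2 hb) + x), hfM, ?_⟩
  have key : itAdd (d - 1) (f.2 + (s g'.2 hb + x.2))
      = itAdd (d - 1) f.2 + h g'.2 hb + (g'.2 + (y + itAdd (d - 1) x.2)) := by
    rw [itAdd_add, itAdd_add, ← hs g'.2 hb]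
    ac_rfl
  exact Prod.ext rfl key.symm
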